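/- arXiv:math/0012086 — 6 statements merged into one kernel-verified Lean document; each statement's English description precedes it below -/
import Mathlib

section
/- The reduced Burau representation of the braid group B_3 is faithful: the group homomorphism ρ3 : B_3 → GL(2, ℤ[q^{±1}]) determined by σ1 ↦ [[-q, q], [0, 1]] and σ2 ↦ [[1, 0], [1, -q]] is injective. -/
/-- The braid relation for the braid group `B₃` on generators `σ₁ = of 0`, `σ₂ = of 1`:
`σ₁σ₂σ₁ = σ₂σ₁σ₂`. -/
def braidRels3 : Set (FreeGroup (Fin 2)) :=
  {FreeGroup.of 0 * FreeGroup.of 1 * FreeGroup.of 0 *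
    (FreeGroup.of 1 * FreeGroup.of 0 * FreeGroup.of 1)⁻¹}

/-- The braid group `B₃` as a presented group. -/
abbrev BraidGroup3 : Type := PresentedGroup braidRels3

/-- The standard generators `σ₁, σ₂` of `B₃`. -/
def σ₃ (i : Fin 2) : BraidGroup3 := PresentedGroup.of i

open LaurentPolynomial in
/-- The variable `q` of the ring of Laurent polynomials `ℤ[q^{±1}]`. -/
noncomputable def q : LaurentPolynomial ℤ := LaurentPolynomial.T 1


/-!
The full twist `Δ² = (σ₁σ₂σ₁)² = (σ₁σ₂)³` is central, and `B₃ / ⟨Δ²⟩` is the free product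
`C₂ * C₃` generated by the images of `Δ` and `σ₁σ₂`. Specialising `q = -1` sends `Δ` and `σ₁σ₂`
to `S = [[0, -1], [1, 0]]` and `U = [[0, -1], [1, 1]]`, whose Möbius actions on `ℚ ∪ {∞}` play
ping-pong on the positive and the negative rationals. Hence the kernel of `ρ₃` lies in `⟨Δ²⟩`,
and it is trivial there because `det ρ₃(Δ²) = q⁶` has infinite order.
-/

open Monoid Multiplicative

section CyclicFreeProduct

variable {G : Type*} [Group G]

def zmodPowersHom (n : ℕ) (g : G) (hg : g ^ n = 1) : Multiplicative (ZMod n) →* G :=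
  AddMonoidHom.toMultiplicativeLeft <|
    ZMod.lift n ⟨(zpowersHom G g).toAdditiveRight, by
      change Additive.ofMul (g ^ (n : ℤ)) = Additive.ofMul 1
      rw [zpow_natCast, hg]⟩

section

variable {n : ℕ} {g : G} (hg : g ^ n = 1)

lemma zmodPowersHom_ofAdd_intCast (k : ℤ) :
    zmodPowersHom n g hg (ofAdd (k : ZMod n)) = g ^ k := by
  simp [zmodPowersHom, ZMod.lift_coe]

lemma zmodPowersHom_ofAdd_natCast (k : ℕ) :
    zmodPowersHom n g hg (ofAdd (k : ZMod n)) = g ^ k := by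
  simpa using zmodPowersHom_ofAdd_intCast hg k

lemma exists_zmodPowersHom_eq_pow [NeZero n] {x : Multiplicative (ZMod n)} (hx : x ≠ 1) :
    ∃ k, 0 < k ∧ k < n ∧ zmodPowersHom n g hg x = g ^ k := by
  refine ⟨(toAdd x).val, Nat.pos_of_ne_zero ?_, ZMod.val_lt _, ?_⟩
  · rwa [Ne, ZMod.val_eq_zero, toAdd_eq_zero]
  · rw [← zmodPowersHom_ofAdd_natCast hg, ZMod.natCast_zmod_val, ofAdd_toAdd]

end

variable {ι : Type*} (n : ι → ℕ)

abbrev FreeProdCyclic : Type _ := CoprodI fun i => Multiplicative (ZMod (n i))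

namespace FreeProdCyclic

variable {n}

def gen (i : ι) : FreeProdCyclic n :=
  CoprodI.of (M := fun i => Multiplicative (ZMod (n i))) (i := i) (ofAdd 1)

lemma gen_pow_eq_one (i : ι) : gen (n := n) i ^ n i = 1 := by
  rw [gen, ← map_pow, ← ofAdd_nsmul, nsmul_one, ZMod.natCast_self, ofAdd_zero, map_one]

def lift (g : ι → G) (hg : ∀ i, g i ^ n i = 1) : FreeProdCyclic n →* G :=
  CoprodI.lift fun i => zmodPowersHom (n i) (g i) (hg i)

@[simp]
lemma lift_gen (g : ι → G) (hg : ∀ i, g i ^ n i = 1) (i : ι) : lift g hg (gen i) = g i := by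
  simpa [lift, gen] using zmodPowersHom_ofAdd_natCast (hg i) 1

open scoped Function Pointwise in
theorem lift_injective_of_ping_pong [Nontrivial ι] {α : Type*} [MulAction G α] {g : ι → G}
    (hg : ∀ i, g i ^ n i = 1) (hn : ∀ i, n i ≠ 0) (hcard : ∃ i, 3 ≤ n i)
    (X : ι → Set α) (hXnonempty : ∀ i, (X i).Nonempty) (hXdisj : Pairwise (Disjoint on X))
    (hpp : Pairwise fun i j => ∀ k, 0 < k → k < n i → g i ^ k • X j ⊆ X i) :
    Function.Injective (lift g hg) := by
  refine CoprodI.lift_injective_of_ping_pong _ (Or.inr ?_) X hXnonempty hXdisj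
    fun i j hij x hx => ?_
  · obtain ⟨i, hi⟩ := hcard
    have := NeZero.mk (hn i)
    exact ⟨i, by simpa [Cardinal.mk_fintype] using hi⟩
  · have := NeZero.mk (hn i)
    obtain ⟨k, hk0, hkn, hk⟩ := exists_zmodPowersHom_eq_pow (hg i) hx
    rw [hk]
    exact hpp hij k hk0 hkn

end FreeProdCyclic

end CyclicFreeProduct

lemma braid_rel_of_sq_eq_one_of_pow_three_eq_one {G : Type*} [Group G] {s u : G}
    (hs : s ^ 2 = 1) (hu : u ^ 3 = 1) :
    u⁻¹ * s * (s⁻¹ * u ^ 2) * (u⁻¹ * s) = s⁻¹ * u ^ 2 * (u⁻¹ * s) * (s⁻¹ * u ^ 2) :=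
  calc u⁻¹ * s * (s⁻¹ * u ^ 2) * (u⁻¹ * s) = s := by group
    _ = s⁻¹ * u ^ 3 := by rw [hu, mul_one, inv_eq_of_mul_eq_one_right (by rw [← sq, hs])]
    _ = s⁻¹ * u ^ 2 * (u⁻¹ * s) * (s⁻¹ * u ^ 2) := by group

namespace BraidGroup3

variable {G : Type*} [Group G]

lemma braid_rel : σ₃ 0 * σ₃ 1 * σ₃ 0 = σ₃ 1 * σ₃ 0 * σ₃ 1 :=
  PresentedGroup.mk_eq_mk_of_mul_inv_mem rfl

lemma hom_ext {f f' : BraidGroup3 →* G} (h₀ : f (σ₃ 0) = f' (σ₃ 0))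
    (h₁ : f (σ₃ 1) = f' (σ₃ 1)) : f = f' :=
  PresentedGroup.ext fun i => by fin_cases i <;> assumption

def lift (g₁ g₂ : G) (h : g₁ * g₂ * g₁ = g₂ * g₁ * g₂) : BraidGroup3 →* G :=
  PresentedGroup.toGroup (f := ![g₁, g₂]) <| by
    rintro r rfl
    simp [h]

section

variable (g₁ g₂ : G) (h : g₁ * g₂ * g₁ = g₂ * g₁ * g₂)

@[simp] lemma lift_σ₃_zero : lift g₁ g₂ h (σ₃ 0) = g₁ := PresentedGroup.toGroup.of _

@[simp] lemma lift_σ₃_one : lift g₁ g₂ h (σ₃ 1) = g₂ := PresentedGroup.toGroup.of _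

end

def halfTwist : BraidGroup3 := σ₃ 0 * σ₃ 1 * σ₃ 0

def coxeterElt : BraidGroup3 := σ₃ 0 * σ₃ 1

def fullTwist : BraidGroup3 := halfTwist ^ 2

lemma coxeterElt_pow_three : coxeterElt ^ 3 = fullTwist := by
  rw [fullTwist, sq]
  nth_rw 2 [halfTwist]
  rw [braid_rel, halfTwist, coxeterElt, pow_three]
  group

lemma σ₃_zero_eq : σ₃ 0 = coxeterElt⁻¹ * halfTwist := by
  rw [coxeterElt, halfTwist]; group

lemma σ₃_one_eq : σ₃ 1 = halfTwist⁻¹ * coxeterElt ^ 2 := by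
  rw [coxeterElt, halfTwist, sq]; group

lemma halfTwist_mul_σ₃_zero : halfTwist * σ₃ 0 = σ₃ 1 * halfTwist := by
  conv_lhs => rw [halfTwist, braid_rel]
  rw [halfTwist]; group

lemma halfTwist_mul_σ₃_one : halfTwist * σ₃ 1 = σ₃ 0 * halfTwist := by
  conv_rhs => rw [halfTwist, braid_rel]
  rw [halfTwist]; group

lemma fullTwist_mem_center : fullTwist ∈ Subgroup.center BraidGroup3 := by
  have hconj : (MulAut.conj fullTwist).toMonoidHom = MonoidHom.id _ := by
    apply hom_ext <;>
      simp [fullTwist, sq, mul_assoc, halfTwist_mul_σ₃_zero, halfTwist_mul_σ₃_one]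
  refine Subgroup.mem_center_iff.mpr fun g => ?_
  exact eq_mul_inv_iff_mul_eq.mp (by simpa using (DFunLike.congr_fun hconj g).symm)

instance : (Subgroup.zpowers fullTwist).Normal := by
  refine ⟨fun _ ⟨k, hk⟩ g => ?_⟩
  have hg : Commute g fullTwist := Subgroup.mem_center_iff.mp fullTwist_mem_center g
  rw [← hk, (hg.zpow_right k).eq, mul_inv_cancel_right]
  exact Subgroup.zpow_mem_zpowers _ k

open FreeProdCyclic

def toFreeProd : BraidGroup3 →* FreeProdCyclic ![2, 3] :=
  lift ((gen 1)⁻¹ * gen 0) ((gen 0)⁻¹ * gen 1 ^ 2) <|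
    braid_rel_of_sq_eq_one_of_pow_three_eq_one (gen_pow_eq_one 0) (gen_pow_eq_one 1)

def descend (f : BraidGroup3 →* G) (hf : f fullTwist = 1) : FreeProdCyclic ![2, 3] →* G :=
  FreeProdCyclic.lift ![f halfTwist, f coxeterElt] <| Fin.forall_fin_two.mpr
    ⟨by simpa [fullTwist] using hf, by simpa [← coxeterElt_pow_three] using hf⟩

lemma descend_comp_toFreeProd (f : BraidGroup3 →* G) (hf : f fullTwist = 1) :
    (descend f hf).comp toFreeProd = f := by
  apply hom_ext
  · conv_rhs => rw [σ₃_zero_eq]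
    simp [toFreeProd, descend]
  · conv_rhs => rw [σ₃_one_eq]
    simp [toFreeProd, descend]

lemma ker_toFreeProd_le : toFreeProd.ker ≤ Subgroup.zpowers fullTwist := by
  intro g hg
  have hπ : QuotientGroup.mk' (Subgroup.zpowers fullTwist) fullTwist = 1 :=
    (QuotientGroup.eq_one_iff _).mpr (Subgroup.mem_zpowers _)
  rw [← QuotientGroup.eq_one_iff, ← QuotientGroup.mk'_apply, ← descend_comp_toFreeProd _ hπ,
    MonoidHom.comp_apply, MonoidHom.mem_ker.mp hg, map_one]

end BraidGroup3

namespace OnePoint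

open Set Pointwise

variable {K : Type*} [Field K] [DecidableEq K]

lemma toPermHom_scalar (c : Kˣ) :
    MulAction.toPermHom _ (OnePoint K) (Matrix.GeneralLinearGroup.scalar (Fin 2) c) = 1 := by
  ext x
  cases x with
  | infty => simp [smul_infty_eq_ite]
  | coe k => simp [smul_some_eq_ite]

variable {g : GL (Fin 2) K} {a b c d : K} (hg : (g : Matrix (Fin 2) (Fin 2) K) = !![a, b; c, d])
include hg

lemma smul_coe_of_eq {k : K} (hk : c * k + d ≠ 0) :
    g • (k : OnePoint K) = ↑((a * k + b) / (c * k + d)) := by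
  simp [smul_some_eq_ite, hg, hk]

lemma toPerm_smul_image_some_subset {s t : Set K}
    (h : ∀ k ∈ s, c * k + d ≠ 0 ∧ (a * k + b) / (c * k + d) ∈ t) :
    (MulAction.toPerm g : Equiv.Perm (OnePoint K)) • (OnePoint.some '' s) ⊆
      OnePoint.some '' t := by
  rintro _ ⟨_, ⟨k, hk, rfl⟩, rfl⟩
  exact ⟨_, (h k hk).2, (smul_coe_of_eq hg (h k hk).1).symm⟩

end OnePoint

open OnePoint Set in
/-- `S : x ↦ -1/x` maps the negative numbers to the positive ones, while `U : x ↦ -1/(x+1)` and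
`U² : x ↦ -1 - 1/x` map the positive numbers to the negative ones. -/
theorem FreeProdCyclic.lift_injective_modular {K : Type*} [Field K] [LinearOrder K]
    [IsStrictOrderedRing K] {S U : GL (Fin 2) K}
    (hS : (S : Matrix (Fin 2) (Fin 2) K) = !![0, -1; 1, 0])
    (hU : (U : Matrix (Fin 2) (Fin 2) K) = !![0, -1; 1, 1])
    (h : ∀ i : Fin 2,
      ![MulAction.toPermHom _ (OnePoint K) S, MulAction.toPermHom _ _ U] i ^ ![2, 3] i = 1) :
    Function.Injective (FreeProdCyclic.lift _ h) := by
  have hU2 : ((U ^ 2 : GL (Fin 2) K) : Matrix (Fin 2) (Fin 2) K) = !![-1, -1; 1, 0] := by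
    rw [Units.val_pow_eq_pow_val, hU, sq, Matrix.mul_fin_two]; norm_num
  have hdisj := (disjoint_image_iff (f := OnePoint.some) coe_injective).mpr
    (Ioi_disjoint_Iio_same (a := (0 : K)))
  refine lift_injective_of_ping_pong h (by decide) ⟨1, le_rfl⟩
    ![OnePoint.some '' Ioi (0 : K), OnePoint.some '' Iio (0 : K)]
    (Fin.forall_fin_two.mpr ⟨⟨_, 1, one_pos, rfl⟩, ⟨_, -1, neg_one_lt_zero, rfl⟩⟩) ?_ ?_
  · intro i j hij
    fin_cases i <;> fin_cases j
    exacts [absurd rfl hij, hdisj, hdisj.symm, absurd rfl hij]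
  · intro i j hij k hk0 hkn
    fin_cases i <;> fin_cases j <;> (try exact absurd rfl hij) <;> simp at hkn ⊢
    · obtain rfl : k = 1 := by omega
      rw [pow_one]
      exact toPerm_smul_image_some_subset hS fun r (hr : r < 0) =>
        ⟨by linarith, div_pos_of_neg_of_neg (by linarith) (by linarith)⟩
    · interval_cases k
      · rw [pow_one]
        exact toPerm_smul_image_some_subset hU fun r (hr : 0 < r) =>
          ⟨by linarith, div_neg_of_neg_of_pos (by linarith) (by linarith)⟩
      · rw [show MulAction.toPerm U ^ 2 = MulAction.toPerm (U ^ 2) from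
          (map_pow (MulAction.toPermHom _ (OnePoint K)) U 2).symm]
        exact toPerm_smul_image_some_subset hU2 fun r (hr : 0 < r) =>
          ⟨by linarith, div_neg_of_neg_of_pos (by linarith) (by linarith)⟩

section BurauRepresentation

open LaurentPolynomial BraidGroup3

noncomputable def evalAt (t : ℚˣ) : LaurentPolynomial ℤ →+* ℚ := eval₂ (Int.castRingHom ℚ) t

lemma evalAt_q (t : ℚˣ) : evalAt t q = t := by simp [evalAt, q, eval₂_T]

variable {ρ : BraidGroup3 →* GL (Fin 2) (LaurentPolynomial ℤ)}
  (h1 : (ρ (σ₃ 0) : Matrix (Fin 2) (Fin 2) (LaurentPolynomial ℤ)) = !![-q, q; 0, 1])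
  (h2 : (ρ (σ₃ 1) : Matrix (Fin 2) (Fin 2) (LaurentPolynomial ℤ)) = !![1, 0; 1, -q])
include h1 h2

lemma burau_coxeterElt :
    (ρ coxeterElt : Matrix (Fin 2) (Fin 2) (LaurentPolynomial ℤ)) = !![0, -q ^ 2; 1, -q] := by
  rw [coxeterElt, map_mul, Units.val_mul, h1, h2, Matrix.mul_fin_two]
  norm_num [sq]

lemma burau_halfTwist :
    (ρ halfTwist : Matrix (Fin 2) (Fin 2) (LaurentPolynomial ℤ)) = !![0, -q ^ 2; -q, 0] := by
  rw [halfTwist, map_mul, Units.val_mul, ← coxeterElt, burau_coxeterElt h1 h2, h1,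
    Matrix.mul_fin_two]
  norm_num [sq]

lemma eq_zero_of_burau_fullTwist_zpow_eq_one {k : ℤ} (hk : ρ (fullTwist ^ k) = 1) : k = 0 := by
  let δ : BraidGroup3 →* ℚˣ := (Units.map (evalAt (Units.mk0 2 two_ne_zero)).toMonoidHom).comp
    (Matrix.GeneralLinearGroup.det.comp ρ)
  have hδ : ((δ fullTwist : ℚˣ) : ℚ) = 64 := by
    simp [δ, fullTwist, Matrix.GeneralLinearGroup.val_det_apply, burau_halfTwist h1 h2,
      Matrix.det_fin_two, evalAt_q]
    norm_num
  have : (64 : ℚ) ^ k = 1 := by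
    rw [← hδ, ← Units.val_zpow_eq_zpow_val, ← map_zpow]
    simp [δ, hk]
  exact (zpow_eq_one_iff_right₀ (by norm_num) (by norm_num)).mp this

lemma burau_ker_le_ker_toFreeProd : ρ.ker ≤ toFreeProd.ker := by
  let ρ' := (Matrix.GeneralLinearGroup.map (evalAt (-1))).comp ρ
  let φ := (MulAction.toPermHom _ (OnePoint ℚ)).comp ρ'
  have hS : (ρ' halfTwist : Matrix (Fin 2) (Fin 2) ℚ) = !![0, -1; 1, 0] := by
    ext i j; fin_cases i <;> fin_cases j <;> simp [ρ', burau_halfTwist h1 h2, evalAt_q]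
  have hU : (ρ' coxeterElt : Matrix (Fin 2) (Fin 2) ℚ) = !![0, -1; 1, 1] := by
    ext i j; fin_cases i <;> fin_cases j <;> simp [ρ', burau_coxeterElt h1 h2, evalAt_q]
  have hφ : φ fullTwist = 1 := by
    have : ρ' fullTwist = Matrix.GeneralLinearGroup.scalar (Fin 2) (-1) := by
      ext i j
      rw [fullTwist, map_pow, Units.val_pow_eq_pow_val, hS, sq, Matrix.mul_fin_two]
      fin_cases i <;> fin_cases j <;> simp
    rw [MonoidHom.comp_apply, this, OnePoint.toPermHom_scalar]
  intro g hg
  have hinj : Function.Injective (descend φ hφ) :=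
    FreeProdCyclic.lift_injective_modular hS hU _
  apply hinj
  rw [← MonoidHom.comp_apply, descend_comp_toFreeProd, map_one, MonoidHom.comp_apply,
    MonoidHom.comp_apply, MonoidHom.mem_ker.mp hg, map_one, map_one]

end BurauRepresentation

open BraidGroup3 in
/-- the reduced Burau representation
`ρ3 : B₃ → GL(2, ℤ[q^{±1}])`, `σ₁ ↦ [[-q, q], [0, 1]]`, `σ₂ ↦ [[1, 0], [1, -q]]`,
is injective. -/
theorem burau_B3_faithful
    (ρ3 : BraidGroup3 →* Matrix.GeneralLinearGroup (Fin 2) (LaurentPolynomial ℤ))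
    (h1 : (ρ3 (σ₃ 0) : Matrix (Fin 2) (Fin 2) (LaurentPolynomial ℤ)) = !![-q, q; 0, 1])
    (h2 : (ρ3 (σ₃ 1) : Matrix (Fin 2) (Fin 2) (LaurentPolynomial ℤ)) = !![1, 0; 1, -q]) :
    Function.Injective ρ3 := by
  refine (injective_iff_map_eq_one ρ3).mpr fun g hg => ?_
  obtain ⟨k, rfl⟩ :=
    Subgroup.mem_zpowers_iff.mp (ker_toFreeProd_le (burau_ker_le_ker_toFreeProd h1 h2 hg))
  rw [eq_zero_of_burau_fullTwist_zpow_eq_one h1 h2 hg, zpow_zero]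
end

section
/- The reduced Burau representation of B_4 specialized at q = 2 is not faithful: the group homomorphism B_4 → GL(3, ℚ) determined by σ1 ↦ [[-2, 2, 0], [0, 1, 0], [0, 0, 1]], σ2 ↦ [[1, 0, 0], [1, -2, 2], [0, 0, 1]], σ3 ↦ [[1, 0, 0], [0, 1, 0], [0, 1, -2]] is not injective. -/
/-- The braid relations for the braid group `B₄` on generators
`σ₁ = of 0`, `σ₂ = of 1`, `σ₃ = of 2`. -/
def braidRels4 : Set (FreeGroup (Fin 3)) :=
  { FreeGroup.of 0 * FreeGroup.of 1 * FreeGroup.of 0 *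
      (FreeGroup.of 1 * FreeGroup.of 0 * FreeGroup.of 1)⁻¹,
    FreeGroup.of 1 * FreeGroup.of 2 * FreeGroup.of 1 *
      (FreeGroup.of 2 * FreeGroup.of 1 * FreeGroup.of 2)⁻¹,
    FreeGroup.of 0 * FreeGroup.of 2 * (FreeGroup.of 2 * FreeGroup.of 0)⁻¹ }

/-- The braid group `B₄` as a presented group. -/
abbrev BraidGroup4 : Type := PresentedGroup braidRels4

/-- The standard generators `σ₁, σ₂, σ₃` of `B₄`. -/
def σ₄ (i : Fin 3) : BraidGroup4 := PresentedGroup.of i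

/-- Burau matrices at q = 3, as units. -/
def burau3 : Fin 3 → (Matrix (Fin 3) (Fin 3) ℚ)ˣ
  | 0 => ⟨!![-3, 3, 0; 0, 1, 0; 0, 0, 1], !![-1/3, 1, 0; 0, 1, 0; 0, 0, 1],
      by rw [Matrix.mul_fin_three, Matrix.one_fin_three]; norm_num,
      by rw [Matrix.mul_fin_three, Matrix.one_fin_three]; norm_num⟩
  | 1 => ⟨!![1, 0, 0; 1, -3, 3; 0, 0, 1], !![1, 0, 0; 1/3, -1/3, 1; 0, 0, 1],
      by rw [Matrix.mul_fin_three, Matrix.one_fin_three]; norm_num,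
      by rw [Matrix.mul_fin_three, Matrix.one_fin_three]; norm_num⟩
  | 2 => ⟨!![1, 0, 0; 0, 1, 0; 0, 1, -3], !![1, 0, 0; 0, 1, 0; 0, 1/3, -1/3],
      by rw [Matrix.mul_fin_three, Matrix.one_fin_three]; norm_num,
      by rw [Matrix.mul_fin_three, Matrix.one_fin_three]; norm_num⟩

lemma burau3_rels : ∀ r ∈ braidRels4, FreeGroup.lift burau3 r = 1 := by
  intro r hr
  rcases hr with h | h | h <;> subst h <;>
    simp only [map_mul, map_inv, FreeGroup.lift_apply_of, mul_inv_eq_one] <;>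
    · ext : 1
      simp only [Units.val_mul, burau3]
      norm_num [Matrix.mul_fin_three]

/-- The Burau representation of `B₄` at q = 3. -/
def φ3 : BraidGroup4 →* (Matrix (Fin 3) (Fin 3) ℚ)ˣ := PresentedGroup.toGroup burau3_rels

def wA : BraidGroup4 :=
  σ₄ 1 * σ₄ 1 * σ₄ 0 * σ₄ 0 * σ₄ 2 * σ₄ 2 * σ₄ 1 * σ₄ 1 * σ₄ 0 * σ₄ 2 *
    σ₄ 1 * σ₄ 1 * σ₄ 1 * σ₄ 0 * σ₄ 0 * σ₄ 2 * σ₄ 2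

def wB : BraidGroup4 :=
  σ₄ 0 * σ₄ 0 * σ₄ 2 * σ₄ 2 * σ₄ 1 * σ₄ 1 * σ₄ 1 * σ₄ 0 * σ₄ 2 * σ₄ 1 *
    σ₄ 1 * σ₄ 0 * σ₄ 0 * σ₄ 2 * σ₄ 2 * σ₄ 1 * σ₄ 1

lemma phi3_sigma (i : Fin 3) : φ3 (σ₄ i) = burau3 i := PresentedGroup.toGroup.of burau3_rels

/-- The words `wA` and `wB` are distinct in `B₄`, since Burau at q = 3 separates them. -/
lemma wA_ne_wB : wA ≠ wB := by
  intro h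
  have h2 := congrArg
    (fun x => ((φ3 x : (Matrix (Fin 3) (Fin 3) ℚ)ˣ) : Matrix (Fin 3) (Fin 3) ℚ) 0 0) h
  simp only [wA, wB, map_mul, phi3_sigma, Units.val_mul, burau3] at h2
  norm_num [Matrix.mul_fin_three] at h2

/-- the reduced Burau representation of `B₄` specialized at `q = 2`
over `ℚ` is not injective. -/
theorem burau_B4_unfaithful_at_two
    (ρ : BraidGroup4 →* Matrix.GeneralLinearGroup (Fin 3) ℚ)
    (h1 : (ρ (σ₄ 0) : Matrix (Fin 3) (Fin 3) ℚ) = !![-2, 2, 0; 0, 1, 0; 0, 0, 1])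
    (h2 : (ρ (σ₄ 1) : Matrix (Fin 3) (Fin 3) ℚ) = !![1, 0, 0; 1, -2, 2; 0, 0, 1])
    (h3 : (ρ (σ₄ 2) : Matrix (Fin 3) (Fin 3) ℚ) = !![1, 0, 0; 0, 1, 0; 0, 1, -2]) :
    ¬ Function.Injective ρ := by
  intro hinj
  apply wA_ne_wB
  apply hinj
  ext : 1
  show ((ρ wA : Matrix.GeneralLinearGroup (Fin 3) ℚ) : Matrix (Fin 3) (Fin 3) ℚ) =
    ((ρ wB : Matrix.GeneralLinearGroup (Fin 3) ℚ) : Matrix (Fin 3) (Fin 3) ℚ)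
  simp only [wA, wB, map_mul, Units.val_mul, h1, h2, h3]
  norm_num [Matrix.mul_fin_three]
end

section
/- Let a = σ1, b = σ2, c = σ3 in B_4, let ψ = a^{-3} b^{-2} c^{-1} b c^4 b^{-1} c b a b c^2 b a^{-1} b^{-1} c^{-2}, and let β be the commutator [(ba)^3, ψ^{-1} b ψ] = (ba)^3 (ψ^{-1} b ψ) (ba)^{-3} (ψ^{-1} b ψ)^{-1}. Then β is mapped to the identity matrix by the reduced Burau representation of B_4 specialized at q = 2 over ℚ. -/
/-- The standard generator `a = σ₁` of `B₄`. -/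
def a : BraidGroup4 := PresentedGroup.of 0

/-- The standard generator `b = σ₂` of `B₄`. -/
def b : BraidGroup4 := PresentedGroup.of 1

/-- The standard generator `c = σ₃` of `B₄`. -/
def c : BraidGroup4 := PresentedGroup.of 2

/-- The braid `ψ = a⁻³ b⁻² c⁻¹ b c⁴ b⁻¹ c b a b c² b a⁻¹ b⁻¹ c⁻²` (words composed
right to left, i.e. read as a product in the group). -/
def ψ : BraidGroup4 :=
  a ^ (-3 : ℤ) * b ^ (-2 : ℤ) * c⁻¹ * b * c ^ 4 * b⁻¹ * c * b * a * b * c ^ 2 * b *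
    a⁻¹ * b⁻¹ * c ^ (-2 : ℤ)

/-- The braid `β = [(ba)³, ψ⁻¹ b ψ]`. -/
def β : BraidGroup4 :=
  (b * a) ^ 3 * (ψ⁻¹ * b * ψ) * ((b * a) ^ 3)⁻¹ * (ψ⁻¹ * b * ψ)⁻¹

/-- The Burau matrix of `a` at `q = 2`, as a unit. -/
def uA : Matrix.GeneralLinearGroup (Fin 3) ℚ :=
  Units.mk !![-2, 2, 0; 0, 1, 0; 0, 0, 1] !![-1/2, 1, 0; 0, 1, 0; 0, 0, 1]
    (by norm_num [Matrix.mul_fin_three]; rw [Matrix.one_fin_three])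
    (by norm_num [Matrix.mul_fin_three]; rw [Matrix.one_fin_three])

/-- The Burau matrix of `b` at `q = 2`, as a unit. -/
def uB : Matrix.GeneralLinearGroup (Fin 3) ℚ :=
  Units.mk !![1, 0, 0; 1, -2, 2; 0, 0, 1] !![1, 0, 0; 1/2, -1/2, 1; 0, 0, 1]
    (by norm_num [Matrix.mul_fin_three]; rw [Matrix.one_fin_three])
    (by norm_num [Matrix.mul_fin_three]; rw [Matrix.one_fin_three])

/-- The Burau matrix of `c` at `q = 2`, as a unit. -/
def uC : Matrix.GeneralLinearGroup (Fin 3) ℚ :=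
  Units.mk !![1, 0, 0; 0, 1, 0; 0, 1, -2] !![1, 0, 0; 0, 1, 0; 0, 1/2, -1/2]
    (by norm_num [Matrix.mul_fin_three]; rw [Matrix.one_fin_three])
    (by norm_num [Matrix.mul_fin_three]; rw [Matrix.one_fin_three])

/-- `β` lies in the kernel of the reduced Burau representation of `B₄`
specialized at `q = 2` over `ℚ`. -/
theorem burau_B4_at_two_kernel_element
    (ρ : BraidGroup4 →* Matrix.GeneralLinearGroup (Fin 3) ℚ)
    (h1 : (ρ a : Matrix (Fin 3) (Fin 3) ℚ) = !![-2, 2, 0; 0, 1, 0; 0, 0, 1])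
    (h2 : (ρ b : Matrix (Fin 3) (Fin 3) ℚ) = !![1, 0, 0; 1, -2, 2; 0, 0, 1])
    (h3 : (ρ c : Matrix (Fin 3) (Fin 3) ℚ) = !![1, 0, 0; 0, 1, 0; 0, 1, -2]) :
    ρ β = 1 := by
  have ha : ρ a = uA := Units.ext h1
  have hb : ρ b = uB := Units.ext h2
  have hc : ρ c = uC := Units.ext h3
  rw [β, ψ]
  simp only [map_mul, map_inv, map_zpow, map_pow, ha, hb, hc]
  refine Units.ext ?_
  simp only [uA, uB, uC, zpow_neg, zpow_ofNat, inv_pow, mul_inv_rev, Units.inv_mk,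
    Units.val_mul, Units.val_pow_eq_pow_val, Units.val_mk, Units.val_one]
  norm_num [Matrix.mul_fin_three, pow_succ, pow_zero]
  rw [Matrix.one_fin_three]
end

section
/- Let a = σ1, b = σ2, c = σ3 in B_4, let ψ = a^{-3} b^{-2} c^{-1} b c^4 b^{-1} c b a b c^2 b a^{-1} b^{-1} c^{-2}, and let β be the commutator [(ba)^3, ψ^{-1} b ψ]. Then β is a nontrivial element of the braid group B_4. -/
set_option maxRecDepth 100000


/-- Burau matrices at t = -1. -/
def M1 : (Matrix (Fin 3) (Fin 3) ℤ)ˣ :=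
  ⟨!![1,1,0; 0,1,0; 0,0,1], !![1,-1,0; 0,1,0; 0,0,1], by decide, by decide⟩

def M2 : (Matrix (Fin 3) (Fin 3) ℤ)ˣ :=
  ⟨!![1,0,0; -1,1,1; 0,0,1], !![1,0,0; 1,1,-1; 0,0,1], by decide, by decide⟩

def M3 : (Matrix (Fin 3) (Fin 3) ℤ)ˣ :=
  ⟨!![1,0,0; 0,1,0; 0,-1,1], !![1,0,0; 0,1,0; 0,1,1], by decide, by decide⟩

def burauFun : Fin 3 → (Matrix (Fin 3) (Fin 3) ℤ)ˣ := ![M1, M2, M3]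

theorem burau_rels : ∀ r ∈ braidRels4, FreeGroup.lift burauFun r = 1 := by
  intro r hr
  rcases hr with h | h | h <;> subst h <;>
    simp only [map_mul, map_inv, FreeGroup.lift_apply_of, burauFun] <;>
    rw [Units.ext_iff] <;> decide

def burau : BraidGroup4 →* (Matrix (Fin 3) (Fin 3) ℤ)ˣ :=
  PresentedGroup.toGroup burau_rels

/-- `β = [(ba)³, ψ⁻¹ b ψ]` is a non-trivial element of `B₄`. -/
theorem braid_beta_nontrivial : β ≠ 1 := by
  intro h
  have h2 : burau β = 1 := by rw [h, map_one]
  rw [show β = (b * a) ^ 3 * (ψ⁻¹ * b * ψ) * ((b * a) ^ 3)⁻¹ * (ψ⁻¹ * b * ψ)⁻¹ from rfl,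
    show ψ = a ^ (-3 : ℤ) * b ^ (-2 : ℤ) * c⁻¹ * b * c ^ 4 * b⁻¹ * c * b * a * b * c ^ 2 * b *
      a⁻¹ * b⁻¹ * c ^ (-2 : ℤ) from rfl] at h2
  simp only [map_mul, map_inv, map_pow, map_zpow, a, b, c,
    PresentedGroup.toGroup.of, burau] at h2
  rw [Units.ext_iff] at h2
  revert h2
  decide
end

section
/- The reduced Burau representation of B_4 specialized at q = 1/2 is not faithful: the group homomorphism B_4 → GL(3, ℚ) determined by σ1 ↦ [[-1/2, 1/2, 0], [0, 1, 0], [0, 0, 1]], σ2 ↦ [[1, 0, 0], [1, -1/2, 1/2], [0, 0, 1]], σ3 ↦ [[1, 0, 0], [0, 1, 0], [0, 1, -1/2]] is not injective. -/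
namespace BurauAux

/-- Burau at `q = -1` over `ZMod 5`, generator images as explicit units. -/
def fgen : Fin 3 → (Matrix (Fin 3) (Fin 3) (ZMod 5))ˣ :=
  ![⟨!![1,4,0; 0,1,0; 0,0,1], !![1,1,0; 0,1,0; 0,0,1], by decide, by decide⟩,
    ⟨!![1,0,0; 1,1,4; 0,0,1], !![1,0,0; 4,1,1; 0,0,1], by decide, by decide⟩,
    ⟨!![1,0,0; 0,1,0; 0,1,1], !![1,0,0; 0,1,0; 0,4,1], by decide, by decide⟩]

lemma frels : ∀ r ∈ braidRels4, FreeGroup.lift fgen r = 1 := by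
  intro r hr
  simp only [braidRels4, Set.mem_insert_iff, Set.mem_singleton_iff] at hr
  rcases hr with h | h | h <;> subst h <;>
    simp only [map_mul, map_inv, FreeGroup.lift_apply_of] <;> decide

/-- The Burau specialization at `q = -1` over `ZMod 5`, as a homomorphism from `B₄`. -/
def φ : BraidGroup4 →* (Matrix (Fin 3) (Fin 3) (ZMod 5))ˣ :=
  PresentedGroup.toGroup frels

/-- First word: `σ₃⁻¹ σ₂⁻¹ σ₂⁻¹ σ₁⁻¹ σ₂ σ₃⁻¹ σ₁⁻¹ σ₂ σ₃⁻¹`. -/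
def w₁ : BraidGroup4 :=
  (σ₄ 2)⁻¹ * (σ₄ 1)⁻¹ * (σ₄ 1)⁻¹ * (σ₄ 0)⁻¹ * σ₄ 1 * (σ₄ 2)⁻¹ * (σ₄ 0)⁻¹ * σ₄ 1 * (σ₄ 2)⁻¹

/-- Second word: `σ₃⁻¹ σ₂⁻¹ σ₂⁻¹ σ₁ σ₂ σ₃⁻¹ σ₂ σ₁⁻¹ σ₂`. -/
def w₂ : BraidGroup4 :=
  (σ₄ 2)⁻¹ * (σ₄ 1)⁻¹ * (σ₄ 1)⁻¹ * σ₄ 0 * σ₄ 1 * (σ₄ 2)⁻¹ * σ₄ 1 * (σ₄ 0)⁻¹ * σ₄ 1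

lemma w_ne : w₁ * w₂ ≠ w₂ * w₁ := by
  intro h
  have h5 := congrArg φ h
  simp only [w₁, w₂, map_mul, map_inv, φ, σ₄, PresentedGroup.toGroup.of] at h5
  revert h5
  decide

lemma coe_inv_of_coe (g : Matrix.GeneralLinearGroup (Fin 3) ℚ)
    (A B : Matrix (Fin 3) (Fin 3) ℚ)
    (hg : (g : Matrix (Fin 3) (Fin 3) ℚ) = A) (hAB : A * B = 1) :
    ((g⁻¹ : Matrix.GeneralLinearGroup (Fin 3) ℚ) : Matrix (Fin 3) (Fin 3) ℚ) = B := by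
  calc ((g⁻¹ : Matrix.GeneralLinearGroup (Fin 3) ℚ) : Matrix (Fin 3) (Fin 3) ℚ)
      = ↑(g⁻¹) * (A * B) := by rw [hAB, mul_one]
    _ = (↑(g⁻¹) * (g : Matrix (Fin 3) (Fin 3) ℚ)) * B := by rw [hg, mul_assoc]
    _ = B := by rw [Units.inv_mul, one_mul]

end BurauAux

/-- the reduced Burau representation of `B₄` specialized at `q = 1/2`
over `ℚ` is not injective. -/
theorem burau_B4_unfaithful_at_half
    (ρ : BraidGroup4 →* Matrix.GeneralLinearGroup (Fin 3) ℚ)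
    (h1 : (ρ (σ₄ 0) : Matrix (Fin 3) (Fin 3) ℚ) = !![-(1/2 : ℚ), 1/2, 0; 0, 1, 0; 0, 0, 1])
    (h2 : (ρ (σ₄ 1) : Matrix (Fin 3) (Fin 3) ℚ) = !![1, 0, 0; 1, -(1/2 : ℚ), 1/2; 0, 0, 1])
    (h3 : (ρ (σ₄ 2) : Matrix (Fin 3) (Fin 3) ℚ) = !![1, 0, 0; 0, 1, 0; 0, 1, -(1/2 : ℚ)]) :
    ¬ Function.Injective ρ := by
  intro hinj
  have h1' := BurauAux.coe_inv_of_coe _ _ !![-2, 1, 0; 0, 1, 0; 0, 0, 1] h1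
    (by rw [Matrix.one_fin_three]; norm_num [Matrix.mul_fin_three])
  have h2' := BurauAux.coe_inv_of_coe _ _ !![1, 0, 0; 2, -2, 1; 0, 0, 1] h2
    (by rw [Matrix.one_fin_three]; norm_num [Matrix.mul_fin_three])
  have h3' := BurauAux.coe_inv_of_coe _ _ !![1, 0, 0; 0, 1, 0; 0, 2, -2] h3
    (by rw [Matrix.one_fin_three]; norm_num [Matrix.mul_fin_three])
  have key : ρ (BurauAux.w₁ * BurauAux.w₂) = ρ (BurauAux.w₂ * BurauAux.w₁) := by
    apply Units.ext
    simp only [BurauAux.w₁, BurauAux.w₂, map_mul, map_inv, Units.val_mul, h1, h2, h3,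
      h1', h2', h3']
    norm_num [Matrix.mul_fin_three]
  exact BurauAux.w_ne (hinj key)
end

section
/- For every complex number q0 that is a root of unity, the reduced Burau representation of B_4 specialized at q0 is not faithful: the group homomorphism B_4 → GL(3, ℂ) determined by σ1 ↦ [[-q0, q0, 0], [0, 1, 0], [0, 0, 1]], σ2 ↦ [[1, 0, 0], [1, -q0, q0], [0, 0, 1]], σ3 ↦ [[1, 0, 0], [0, 1, 0], [0, 1, -q0]] is not injective. -/
/-- The exponent-sum values satisfy the braid relations. -/
lemma braid_rels_expSum :
    ∀ r ∈ braidRels4,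
      FreeGroup.lift (fun _ : Fin 3 => Multiplicative.ofAdd (1:ℤ)) r = 1 := by
  intro r hr
  rcases hr with rfl | rfl | rfl <;>
    simp [map_mul, map_inv, FreeGroup.lift_apply_of] <;> group

/-- The exponent-sum homomorphism `B₄ →* Multiplicative ℤ`. -/
noncomputable def expSum4 : BraidGroup4 →* Multiplicative ℤ :=
  PresentedGroup.toGroup braid_rels_expSum

lemma expSum4_of (i : Fin 3) : expSum4 (σ₄ i) = Multiplicative.ofAdd (1:ℤ) := by
  simp [expSum4, σ₄, PresentedGroup.toGroup.of]

lemma burau_fullTwist_pow (q0 : ℂ) :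
    (!![-q0, q0, 0; 0, 1, 0; 0, 0, 1] * !![1, 0, 0; 1, -q0, q0; 0, 0, 1] *
      !![1, 0, 0; 0, 1, 0; 0, 1, -q0] : Matrix (Fin 3) (Fin 3) ℂ) ^ 4
      = q0 ^ 4 • (1 : Matrix (Fin 3) (Fin 3) ℂ) := by
  have h4 : ∀ M : Matrix (Fin 3) (Fin 3) ℂ, M ^ 4 = M * M * (M * M) := by
    intro M
    rw [show (4:ℕ) = 2*2 from rfl, pow_mul, sq, sq]
  rw [h4]
  ext i j
  fin_cases i <;> fin_cases j <;>
    simp [Matrix.mul_apply, Fin.sum_univ_three, Matrix.one_apply, Matrix.smul_apply,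
      Matrix.vecHead, Matrix.vecTail] <;> ring

/-- for every root of unity `q0 ∈ ℂ`, the reduced Burau representation
of `B₄` specialized at `q0` is not injective. -/
theorem burau_B4_unfaithful_at_root_of_unity
    (q0 : ℂ) (hq0 : ∃ n : ℕ, 0 < n ∧ q0 ^ n = 1)
    (ρ : BraidGroup4 →* Matrix.GeneralLinearGroup (Fin 3) ℂ)
    (h1 : (ρ (σ₄ 0) : Matrix (Fin 3) (Fin 3) ℂ) = !![-q0, q0, 0; 0, 1, 0; 0, 0, 1])
    (h2 : (ρ (σ₄ 1) : Matrix (Fin 3) (Fin 3) ℂ) = !![1, 0, 0; 1, -q0, q0; 0, 0, 1])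
    (h3 : (ρ (σ₄ 2) : Matrix (Fin 3) (Fin 3) ℂ) = !![1, 0, 0; 0, 1, 0; 0, 1, -q0]) :
    ¬ Function.Injective ρ := by
  obtain ⟨n, hn, hqn⟩ := hq0
  intro hinj
  set g : BraidGroup4 := (σ₄ 0 * σ₄ 1 * σ₄ 2) ^ (4 * n) with hg
  have hρg : ρ g = 1 := by
    ext1
    have hcoe : ((ρ g : Matrix.GeneralLinearGroup (Fin 3) ℂ) : Matrix (Fin 3) (Fin 3) ℂ)
        = ((ρ (σ₄ 0) : Matrix (Fin 3) (Fin 3) ℂ) * (ρ (σ₄ 1) : Matrix (Fin 3) (Fin 3) ℂ)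
            * (ρ (σ₄ 2) : Matrix (Fin 3) (Fin 3) ℂ)) ^ (4 * n) := by
      rw [hg, map_pow, map_mul, map_mul]
      push_cast
      rfl
    rw [hcoe, h1, h2, h3, pow_mul, burau_fullTwist_pow,
      smul_pow, one_pow, ← pow_mul, mul_comm 4 n, pow_mul, hqn, one_pow, one_smul]
    rfl
  have hg1 : g = 1 := hinj (by rw [hρg, map_one])
  have hφ : expSum4 g = 1 := by rw [hg1, map_one]
  rw [hg, map_pow, map_mul, map_mul, expSum4_of, expSum4_of, expSum4_of] at hφ
  have := congrArg Multiplicative.toAdd hφ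
  simp only [toAdd_pow, toAdd_mul, toAdd_ofAdd, toAdd_one, nsmul_eq_mul,
    Nat.cast_mul, Nat.cast_ofNat] at this
  omega
end
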